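/- Assume the family {f_t}_t is Newton-admissible and the point (τ,q) is sufficiently close to the origin, and let ω₁,…,ω_{k_{L'}} be the leading linear forms produced by the renumbering and polynomials c_{k,l}(s) with df^k(ρ(s)) + Σ_{l<k} c_{k,l}(s) df^l(ρ(s)) = ω_k s^{ν_k} + (higher-order terms), ω_k ≠ 0, ν₁ ≤ ⋯ ≤ ν_{k_{L'}} ≤ d − w_min. Let ρ'(s) be a second real analytic path as in the context, ℓ(s) := ρ(s) − ρ'(s), o_ℓ its order in s, and ℓ_∞ := lim_{s→0⁺} ℓ(s)/|s|^{o_ℓ}. Then ω_k(ℓ_∞) = 0 for every 1 ≤ k ≤ k_{L'}. -/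

import Mathlib

open MvPolynomial Filter Topology Set

noncomputable section

namespace NewtonPaper

/-- A point of a finite-dimensional Euclidean space viewed as a plain function. -/
def pt {m : ℕ} (p : EuclideanSpace ℂ (Fin m)) : Fin m → ℂ := p

/-- `d(w;g)`: the minimal value of `∑ i, w i * α i` over the support of `g`. -/
def dmin {n : ℕ} (w : Fin n → ℕ) (g : MvPolynomial (Fin n) ℂ) : ℕ :=
  sInf {m : ℕ | ∃ α ∈ g.support, (∑ i, w i * α i) = m}

/-- The face function `g_w` of `g` with respect to the weight vector `w`. -/
def facePoly {n : ℕ} (w : Fin n → ℕ) (g : MvPolynomial (Fin n) ℂ) : MvPolynomial (Fin n) ℂ :=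
  ∑ α ∈ g.support.filter (fun α => (∑ i, w i * α i) = dmin w g), monomial α (coeff α g)

/-- The Newton polyhedron `Γ₊(g)`. -/
def NewtonPolyhedron {n : ℕ} (g : MvPolynomial (Fin n) ℂ) : Set (Fin n → ℝ) :=
  convexHull ℝ (⋃ α ∈ g.support, {x : Fin n → ℝ | ∀ i, (α i : ℝ) ≤ x i})

/-- The Newton boundary `Γ(g)`: the union of the compact faces of `Γ₊(g)`, i.e. of the
faces of `Γ₊(g)` supported by strictly positive linear functionals. -/
def NewtonBoundary {n : ℕ} (g : MvPolynomial (Fin n) ℂ) : Set (Fin n → ℝ) :=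
  ⋃ w ∈ {w : Fin n → ℝ | ∀ i, 0 < w i},
    {x ∈ NewtonPolyhedron g |
      ∀ y ∈ NewtonPolyhedron g, (∑ i, w i * x i) ≤ ∑ i, w i * y i}

/-- `g` vanishes identically on the coordinate subspace `ℂ^I`. -/
def VanishesOn {n : ℕ} (g : MvPolynomial (Fin n) ℂ) (I : Set (Fin n)) : Prop :=
  ∀ z : Fin n → ℂ, (∀ i, i ∉ I → z i = 0) → eval z g = 0

/-- `g 0, …, g (p-1)` define a (Newton) non-degenerate complete intersection germ at `0`. -/
def IsNondegCI {n p : ℕ} (g : Fin p → MvPolynomial (Fin n) ℂ) : Prop :=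
  ∀ w : Fin n → ℕ, (∀ i, 0 < w i) →
    ∀ z : Fin n → ℂ, (∀ i, z i ≠ 0) → (∀ j, eval z (facePoly w (g j)) = 0) →
      LinearIndependent ℂ fun j => fun i => eval z (pderiv i (facePoly w (g j)))

/-- `R` is a radius of local tameness of the set of functions `{g 0, …, g (p-1)}`. -/
def IsTameRadius {n p : ℕ} (R : ℝ) (g : Fin p → MvPolynomial (Fin n) ℂ) : Prop :=
  ∀ I : Finset (Fin n), I.Nonempty → (∀ j, VanishesOn (g j) ↑I) →
    ∀ w : Fin n → ℕ, w ≠ 0 → (∀ i, w i = 0 ↔ i ∈ I) →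
      ∀ z : Fin n → ℂ, (∀ i, z i ≠ 0) → (∑ i ∈ I, ‖z i‖ ^ 2) < R →
        (∀ j, eval z (facePoly w (g j)) = 0) →
        LinearIndependent ℂ fun j => fun i : {i : Fin n // i ∉ I} =>
          eval z (pderiv i.1 (facePoly w (g j)))

/-- The specialisation `f_t` of a polynomial `P` on `ℂ × ℂⁿ` (variable `0` is `t`). -/
def specialize {n : ℕ} (t : ℂ) (P : MvPolynomial (Fin (n + 1)) ℂ) : MvPolynomial (Fin n) ℂ :=
  aeval (Fin.cases (C t) fun i => X i) P

/-- The family `{f_t}`, where `f = (F 0) ⋯ (F (k₀-1))`, is Newton-admissible. -/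
def NewtonAdmissible {n k₀ : ℕ} (F : Fin k₀ → MvPolynomial (Fin (n + 1)) ℂ) : Prop :=
  ∃ R > (0 : ℝ), ∃ τ > (0 : ℝ), ∀ t : ℂ, ‖t‖ < τ →
    (∀ k, NewtonBoundary (specialize t (F k)) = NewtonBoundary (specialize 0 (F k))) ∧
    ∀ (p : ℕ) (κ : Fin p → Fin k₀), Function.Injective κ →
      IsNondegCI (fun j => specialize t (F (κ j))) ∧
      ∃ R' > R, IsTameRadius R' fun j => specialize t (F (κ j))

/-- The stratum `S^I(K)` of the canonical toric stratification of `V(f) ⊆ ℂ × ℂⁿ`. -/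
def stratum {n k₀ : ℕ} (F : Fin k₀ → MvPolynomial (Fin (n + 1)) ℂ)
    (I : Set (Fin n)) (K : Set (Fin k₀)) : Set (EuclideanSpace ℂ (Fin (n + 1))) :=
  {p | (∀ i : Fin n, pt p i.succ ≠ 0 ↔ i ∈ I) ∧ ∀ k, eval (pt p) (F k) = 0 ↔ k ∈ K}

/-- The slice `S^I_t(K)` of `S^I(K)`, viewed in `ℂⁿ`. -/
def stratumT {n k₀ : ℕ} (F : Fin k₀ → MvPolynomial (Fin (n + 1)) ℂ) (t : ℂ)
    (I : Set (Fin n)) (K : Set (Fin k₀)) : Set (EuclideanSpace ℂ (Fin n)) :=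
  {z | (∀ i : Fin n, pt z i ≠ 0 ↔ i ∈ I) ∧ ∀ k, eval (pt z) (specialize t (F k)) = 0 ↔ k ∈ K}

/-- Orthogonal projection onto a subspace, as an endomorphism. -/
def projOf {m : ℕ} (T : Submodule ℂ (EuclideanSpace ℂ (Fin m))) :
    EuclideanSpace ℂ (Fin m) →L[ℂ] EuclideanSpace ℂ (Fin m) :=
  T.subtypeL.comp (T.orthogonalProjection)

/-- Tangent space of a set at a point (the ℂ-span of the tangent cone; for a
non-singular complex submanifold this is the usual tangent space). -/
def tangentSpaceAt {m : ℕ} (S : Set (EuclideanSpace ℂ (Fin m)))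
    (p : EuclideanSpace ℂ (Fin m)) : Submodule ℂ (EuclideanSpace ℂ (Fin m)) :=
  Submodule.span ℂ (tangentConeAt ℂ S p)

/-- Convergence of subspaces in the sense of convergence of orthogonal projections. -/
def TendstoSubspaces {α : Type*} {m : ℕ} (l : Filter α)
    (T : α → Submodule ℂ (EuclideanSpace ℂ (Fin m)))
    (T' : Submodule ℂ (EuclideanSpace ℂ (Fin m))) : Prop :=
  Tendsto (fun x => projOf (T x)) l (𝓝 (projOf T'))

/-- Whitney's condition (b) for the pair `(S', S)`. -/
def WhitneyB {m : ℕ} (S' S : Set (EuclideanSpace ℂ (Fin m))) : Prop :=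
  ∀ q ∈ S' ∩ closure S, ∀ pm qm : ℕ → EuclideanSpace ℂ (Fin m),
    ∀ T : Submodule ℂ (EuclideanSpace ℂ (Fin m)), ∀ u : EuclideanSpace ℂ (Fin m),
      (∀ j, pm j ∈ S) → (∀ j, qm j ∈ S') → (∀ j, pm j ≠ qm j) →
      Tendsto pm atTop (𝓝 q) → Tendsto qm atTop (𝓝 q) →
      TendstoSubspaces atTop (fun j => tangentSpaceAt S (pm j)) T →
      Tendsto (fun j => (‖pm j - qm j‖ : ℝ)⁻¹ • (pm j - qm j)) atTop (𝓝 u) →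
      u ∈ T

/-- `S` is, near `p ∈ S`, a non-singular (complex) locally closed submanifold. -/
def IsNonsingularAt {m : ℕ} (S : Set (EuclideanSpace ℂ (Fin m)))
    (p : EuclideanSpace ℂ (Fin m)) : Prop :=
  ∃ (k : ℕ) (U : Set (EuclideanSpace ℂ (Fin m)))
    (g : EuclideanSpace ℂ (Fin m) → EuclideanSpace ℂ (Fin k)),
    IsOpen U ∧ p ∈ U ∧ Differentiable ℂ g ∧ S ∩ U = {x ∈ U | g x = 0} ∧
      Function.Surjective (fderiv ℂ g p)

/-- Whitney (b)-regular stratification of `V`. -/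
def IsWhitneyStratification {m : ℕ} (V : Set (EuclideanSpace ℂ (Fin m)))
    (𝒮 : Set (Set (EuclideanSpace ℂ (Fin m)))) : Prop :=
  ⋃₀ 𝒮 = V ∧
  (∀ S ∈ 𝒮, ∀ S' ∈ 𝒮, S ≠ S' → Disjoint S S') ∧
  (∀ S ∈ 𝒮, ∀ p ∈ S, IsNonsingularAt S p) ∧
  (∀ S ∈ 𝒮, ∀ S' ∈ 𝒮, S ≠ S' → WhitneyB S' S)

/-- The coefficient vector of the complex differential of `P` at `p`. -/
def dvec {m : ℕ} (P : MvPolynomial (Fin m) ℂ) (p : EuclideanSpace ℂ (Fin m)) :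
    Fin m → ℂ := fun j => eval (pt p) (pderiv j P)

/-- The kernel of the complex differential of `P` at `p`. -/
def dKer {m : ℕ} (P : MvPolynomial (Fin m) ℂ) (p : EuclideanSpace ℂ (Fin m)) :
    Submodule ℂ (EuclideanSpace ℂ (Fin m)) :=
  LinearMap.ker (ContinuousLinearMap.toLinearMap
    (∑ j, dvec P p j • (EuclideanSpace.proj j : EuclideanSpace ℂ (Fin m) →L[ℂ] ℂ)))

/-- The subspace `ℂ × ℂ^I ⊆ ℂ × ℂⁿ`, where `I = {i | (i : ℕ) < nI}`. -/
def axisCI (n nI : ℕ) : Submodule ℂ (EuclideanSpace ℂ (Fin (n + 1))) :=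
  ⨅ i ∈ {i : Fin n | nI ≤ (i : ℕ)},
    LinearMap.ker (ContinuousLinearMap.toLinearMap
      (EuclideanSpace.proj i.succ : EuclideanSpace ℂ (Fin (n + 1)) →L[ℂ] ℂ))

/-- Thom's `a_f` condition for a stratification `𝒮`, with `V(f) = {f = 0}`. -/
def ThomAf {m : ℕ} (P : MvPolynomial (Fin m) ℂ)
    (𝒮 : Set (Set (EuclideanSpace ℂ (Fin m)))) : Prop :=
  ∀ S ∈ 𝒮, ∀ q ∈ S, ∀ pm : ℕ → EuclideanSpace ℂ (Fin m),
    ∀ T : Submodule ℂ (EuclideanSpace ℂ (Fin m)),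
      (∀ j, eval (pt (pm j)) P ≠ 0) → (∀ j, dvec P (pm j) ≠ 0) →
      Tendsto pm atTop (𝓝 q) →
      TendstoSubspaces atTop (fun j => dKer P (pm j)) T →
      tangentSpaceAt S q ≤ T

/-- Inclusion `Fin m → Fin k₀` given `m ≤ k₀`. -/
def castIdx {k₀ m : ℕ} (h : m ≤ k₀) (k : Fin m) : Fin k₀ :=
  ⟨k, lt_of_lt_of_le k.isLt h⟩

/-!
Put the weight `0` on `t` and `w_i` on `z_i`, and write `ρ_j(s) ~ a_j s^{w_j}`. Since the Newton
boundary of `f^k_t` does not depend on `t`, every monomial of `f^k` has weighted degree at least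
`d`, so the partial derivatives of `f^k` in the weight-zero directions (`t` and `z_i`, `i ∈ I`)
are `o(s^{d-1})` along `ρ`; as `ν_k < d`, the form `ω_k` vanishes on these directions. Off `I`
the path `ρ'` has zero coordinates, hence `o_ℓ ≤ w_min` and `ℓ_∞` has coordinate `a_i` where
`w_i = o_ℓ` and `0` elsewhere. If `o_ℓ < w_min`, then `ℓ_∞` lives in the weight-zero directions.
If `o_ℓ = w_min`, differentiate `f^k(ρ(s)) = 0`: the combination of differentials defining `ω_k`
kills `ρ'(s)`, and dividing by `s^{ν_k + w_min - 1}` gives `w_min · ω_k(ℓ_∞) = 0`.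
-/

section Newton

variable {n : ℕ}

lemma newtonBoundary_subset_newtonPolyhedron (g : MvPolynomial (Fin n) ℂ) :
    NewtonBoundary g ⊆ NewtonPolyhedron g :=
  Set.iUnion₂_subset fun _ _ => Set.sep_subset _ _

lemma le_of_mem_newtonPolyhedron {g : MvPolynomial (Fin n) ℂ} {u : Fin n → ℝ}
    (hu : ∀ i, 0 ≤ u i) {c : ℝ} (hc : ∀ α ∈ g.support, c ≤ ∑ i, u i * α i)
    {x : Fin n → ℝ} (hx : x ∈ NewtonPolyhedron g) : c ≤ ∑ i, u i * x i := by
  have hlin : IsLinearMap ℝ (fun x : Fin n → ℝ => ∑ i, u i * x i) :=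
    ⟨fun x y => by simp only [Pi.add_apply, mul_add, Finset.sum_add_distrib],
     fun r x => by
       simp only [Pi.smul_apply, smul_eq_mul, Finset.mul_sum]
       exact Finset.sum_congr rfl fun i _ => by ring⟩
  refine convexHull_min ?_ (convex_halfSpace_ge hlin c) hx
  simp only [Set.iUnion_subset_iff]
  intro α hα y hy
  exact (hc α hα).trans (Finset.sum_le_sum fun i _ => mul_le_mul_of_nonneg_left (hy i) (hu i))

lemma dmin_le_of_mem_support {g : MvPolynomial (Fin n) ℂ} (w : Fin n → ℕ) {α : Fin n →₀ ℕ}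
    (hα : α ∈ g.support) : dmin w g ≤ ∑ i, w i * α i :=
  Nat.sInf_le ⟨α, hα, rfl⟩

lemma dmin_le_of_mem_newtonPolyhedron {g : MvPolynomial (Fin n) ℂ} (w : Fin n → ℕ)
    {x : Fin n → ℝ} (hx : x ∈ NewtonPolyhedron g) : (dmin w g : ℝ) ≤ ∑ i, w i * x i :=
  le_of_mem_newtonPolyhedron (fun i => (w i).cast_nonneg)
    (fun α hα => by exact_mod_cast dmin_le_of_mem_support w hα) hx

lemma mem_newtonBoundary_of_forall_le {g : MvPolynomial (Fin n) ℂ} {u : Fin n → ℝ}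
    (hu : ∀ i, 0 < u i) {α : Fin n →₀ ℕ} (hα : α ∈ g.support)
    (hmin : ∀ β ∈ g.support, ∑ i, u i * α i ≤ ∑ i, u i * β i) :
    (fun i => (α i : ℝ)) ∈ NewtonBoundary g := by
  refine Set.mem_biUnion (show u ∈ {w : Fin n → ℝ | ∀ i, 0 < w i} from hu)
    ⟨subset_convexHull ℝ _ (Set.mem_biUnion hα fun _ => le_rfl), fun y hy => ?_⟩
  exact le_of_mem_newtonPolyhedron (fun i => (hu i).le) hmin hy

/-- The weight `w` may vanish somewhere, so the minimum is approached through the positive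
weights `w + δ`, whose minimising exponents lie on the Newton boundary. -/
lemma dmin_le_of_newtonBoundary_subset {g h : MvPolynomial (Fin n) ℂ}
    (hgh : NewtonBoundary g ⊆ NewtonPolyhedron h) (w : Fin n → ℕ) {β : Fin n →₀ ℕ}
    (hβ : β ∈ g.support) : dmin w h ≤ ∑ i, w i * β i := by
  set C : ℝ := ∑ i, (β i : ℝ)
  set δ : ℝ := 1 / (C + 1)
  have hC : 0 ≤ C := Finset.sum_nonneg fun i _ => (β i).cast_nonneg
  have hδ : 0 < δ := by positivity
  set u : Fin n → ℝ := fun i => w i + δ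
  obtain ⟨α, hα, hmin⟩ := Finset.exists_min_image g.support
    (fun α => ∑ i, u i * (α i : ℝ)) ⟨β, hβ⟩
  have hδC : δ * C < 1 := by
    rw [div_mul_eq_mul_div, one_mul, div_lt_one (by linarith)]
    linarith
  have key : (dmin w h : ℝ) < ∑ i, (w i : ℝ) * β i + 1 := calc
    (dmin w h : ℝ) ≤ ∑ i, w i * (α i : ℝ) :=
      dmin_le_of_mem_newtonPolyhedron w (hgh (mem_newtonBoundary_of_forall_le
        (fun i => by positivity) hα hmin))
    _ ≤ ∑ i, u i * (α i : ℝ) :=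
      Finset.sum_le_sum fun i _ => mul_le_mul_of_nonneg_right (by simp [u, hδ.le]) (by positivity)
    _ ≤ ∑ i, u i * (β i : ℝ) := hmin β hβ
    _ = ∑ i, w i * (β i : ℝ) + δ * C := by
      simp only [u, add_mul, Finset.sum_add_distrib, C, Finset.mul_sum]
    _ < ∑ i, w i * (β i : ℝ) + 1 := by linarith
  exact Nat.lt_add_one_iff.mp (by exact_mod_cast key)

end Newton

section Specialize

variable {n : ℕ}

lemma specialize_eq_eval_finSuccEquiv (t : ℂ) (P : MvPolynomial (Fin (n + 1)) ℂ) :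
    specialize t P = Polynomial.eval (C t) (finSuccEquiv ℂ n P) := by
  have : (aeval (Fin.cases (C t) X) : MvPolynomial (Fin (n + 1)) ℂ →ₐ[ℂ] _) =
      ((Polynomial.aeval (C t)).restrictScalars ℂ).comp (finSuccEquiv ℂ n).toAlgHom := by
    refine MvPolynomial.algHom_ext fun i => Fin.cases ?_ (fun i => ?_) i <;>
      simp [finSuccEquiv_X_zero, finSuccEquiv_X_succ]
  exact congrArg (fun φ : MvPolynomial (Fin (n + 1)) ℂ →ₐ[ℂ] _ => φ P) this

lemma exists_polynomial_coeff_specialize (P : MvPolynomial (Fin (n + 1)) ℂ) (α : Fin n →₀ ℕ) :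
    ∃ q : Polynomial ℂ, (∀ m, q.coeff m = coeff (Finsupp.cons m α) P) ∧
      ∀ t, coeff α (specialize t P) = q.eval t := by
  classical
  set Q := finSuccEquiv ℂ n P
  refine ⟨∑ m ∈ Q.support, Polynomial.monomial m (coeff α (Q.coeff m)), fun m => ?_, fun t => ?_⟩
  · rw [Polynomial.finsetSum_coeff, ← finSuccEquiv_coeff_coeff]
    simp only [Polynomial.coeff_monomial, Finset.sum_ite_eq', Polynomial.mem_support_iff]
    split_ifs with h
    · rfl
    · rw [not_not.mp h, coeff_zero]
  · rw [specialize_eq_eval_finSuccEquiv, Polynomial.eval_eq_sum, Polynomial.sum_def,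
      coeff_sum, Polynomial.eval_finsetSum]
    refine Finset.sum_congr rfl fun m _ => ?_
    rw [Polynomial.eval_monomial, ← map_pow, mul_comm, coeff_C_mul, mul_comm]

/-- The coefficient of `z^(tail γ)` in `P_t` is a non-zero polynomial in `t`, so it vanishes
only at finitely many `t`. -/
lemma exists_norm_lt_tail_mem_support_specialize {P : MvPolynomial (Fin (n + 1)) ℂ}
    {γ : Fin (n + 1) →₀ ℕ} (hγ : γ ∈ P.support) {r : ℝ} (hr : 0 < r) :
    ∃ t : ℂ, ‖t‖ < r ∧ Finsupp.tail γ ∈ (specialize t P).support := by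
  obtain ⟨q, hq, hqt⟩ := exists_polynomial_coeff_specialize P (Finsupp.tail γ)
  have hq0 : q ≠ 0 := fun h => mem_support_iff.mp hγ (by
    rw [← Finsupp.cons_tail γ, ← hq, h, Polynomial.coeff_zero])
  have hinf : ((fun s : ℝ => (s : ℂ)) '' Set.Ioo 0 r).Infinite :=
    (Set.Ioo_infinite hr).image Complex.ofReal_injective.injOn
  obtain ⟨_, ⟨s, hs, rfl⟩, hroot⟩ := Set.not_subset.mp
    fun h => hinf ((q.finite_setOfPred_isRoot hq0).subset h)
  refine ⟨s, by simpa [abs_of_pos hs.1] using hs.2, ?_⟩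
  rw [mem_support_iff, hqt]
  exact hroot

lemma dmin_specialize_le_of_mem_support {P : MvPolynomial (Fin (n + 1)) ℂ} {r : ℝ}
    (hNB : ∀ t : ℂ, ‖t‖ < r → NewtonBoundary (specialize t P) = NewtonBoundary (specialize 0 P))
    {τ : ℂ} (hτ : ‖τ‖ < r) (w : Fin n → ℕ) {γ : Fin (n + 1) →₀ ℕ} (hγ : γ ∈ P.support) :
    dmin w (specialize τ P) ≤ ∑ i, w i * γ i.succ := by
  obtain ⟨t, ht, hmem⟩ :=
    exists_norm_lt_tail_mem_support_specialize hγ ((norm_nonneg τ).trans_lt hτ)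
  refine dmin_le_of_newtonBoundary_subset ?_ w hmem
  rw [hNB t ht, ← hNB τ hτ]
  exact newtonBoundary_subset_newtonPolyhedron _

end Specialize

section Asymptotics

lemma tendsto_ofReal_pow_nhdsGT_zero (k : ℕ) :
    Tendsto (fun s : ℝ => (s : ℂ) ^ k) (𝓝[>] 0) (𝓝 ((0 : ℂ) ^ k)) := by
  have hc : Continuous fun s : ℝ => (s : ℂ) ^ k := by fun_prop
  convert (hc.tendsto 0).mono_left nhdsWithin_le_nhds using 2
  simp

lemma ofReal_pow_inv_mul_eventuallyEq {f : ℝ → ℂ} {p q : ℕ} (hpq : p ≤ q) :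
    (fun s : ℝ => ((s : ℂ) ^ p)⁻¹ * f s) =ᶠ[𝓝[>] 0]
      fun s => (s : ℂ) ^ (q - p) * (((s : ℂ) ^ q)⁻¹ * f s) := by
  filter_upwards [self_mem_nhdsWithin] with s (hs : 0 < s)
  have hs' : (s : ℂ) ≠ 0 := Complex.ofReal_ne_zero.mpr hs.ne'
  rw [← mul_assoc, ← Nat.sub_add_cancel hpq, pow_add, Nat.add_sub_cancel, mul_inv,
    ← mul_assoc, mul_inv_cancel₀ (pow_ne_zero _ hs'), one_mul]

lemma tendsto_ofReal_pow_inv_mul_of_le {f : ℝ → ℂ} {p q : ℕ} {b : ℂ}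
    (h : Tendsto (fun s : ℝ => ((s : ℂ) ^ q)⁻¹ * f s) (𝓝[>] 0) (𝓝 b)) (hpq : p ≤ q) :
    Tendsto (fun s : ℝ => ((s : ℂ) ^ p)⁻¹ * f s) (𝓝[>] 0) (𝓝 (if p = q then b else 0)) := by
  convert ((tendsto_ofReal_pow_nhdsGT_zero (q - p)).mul h).congr'
    (ofReal_pow_inv_mul_eventuallyEq hpq).symm using 2
  rcases hpq.eq_or_lt with rfl | hlt
  · simp
  · simp [hlt.ne, Nat.sub_ne_zero_of_lt hlt]

lemma le_and_eq_of_tendsto_ofReal_pow_inv_mul {f : ℝ → ℂ} {p q : ℕ} {a b : ℂ} (ha : a ≠ 0)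
    (hp : Tendsto (fun s : ℝ => ((s : ℂ) ^ p)⁻¹ * f s) (𝓝[>] 0) (𝓝 a))
    (hq : Tendsto (fun s : ℝ => ((s : ℂ) ^ q)⁻¹ * f s) (𝓝[>] 0) (𝓝 b)) :
    q ≤ p ∧ b = if q = p then a else 0 := by
  have hqp : q ≤ p := by
    by_contra! hlt
    have := tendsto_nhds_unique hp (tendsto_ofReal_pow_inv_mul_of_le hq hlt.le)
    exact ha (by simpa [hlt.ne] using this)
  exact ⟨hqp, tendsto_nhds_unique hq (tendsto_ofReal_pow_inv_mul_of_le hp hqp)⟩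

lemma _root_.AnalyticAt.exists_eventuallyEq_pow_smul_of_tendsto {g : ℝ → ℂ} (hg : AnalyticAt ℝ g 0)
    {m : ℕ} {a : ℂ} (ha : a ≠ 0)
    (h : Tendsto (fun s : ℝ => ((s : ℂ) ^ m)⁻¹ * g s) (𝓝[>] 0) (𝓝 a)) :
    ∃ u : ℝ → ℂ, AnalyticAt ℝ u 0 ∧ u 0 = a ∧ ∀ᶠ s in 𝓝 0, g s = s ^ m • u s := by
  have hg0 : ¬∀ᶠ s in 𝓝 (0 : ℝ), g s = 0 := fun h0 => ha <| tendsto_nhds_unique h <|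
    tendsto_const_nhds.congr' <| by
      filter_upwards [nhdsWithin_le_nhds h0] with s hs
      rw [hs, mul_zero]
  obtain ⟨k, u, hu, hu0, hgu⟩ := hg.exists_eventuallyEq_pow_smul_nonzero_iff.mpr hg0
  simp only [sub_zero] at hgu
  have hk : Tendsto (fun s : ℝ => ((s : ℂ) ^ k)⁻¹ * g s) (𝓝[>] 0) (𝓝 (u 0)) := by
    refine (hu.continuousAt.tendsto.mono_left nhdsWithin_le_nhds).congr' ?_
    filter_upwards [nhdsWithin_le_nhds hgu, self_mem_nhdsWithin] with s hs (hs0 : 0 < s)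
    rw [hs, Complex.real_smul, Complex.ofReal_pow, ← mul_assoc,
      inv_mul_cancel₀ (pow_ne_zero _ (Complex.ofReal_ne_zero.mpr hs0.ne')), one_mul]
  obtain ⟨-, hval⟩ := le_and_eq_of_tendsto_ofReal_pow_inv_mul hu0 hk h
  by_cases hmk : m = k
  · subst hmk
    exact ⟨u, hu, by simpa using hval.symm, hgu⟩
  · exact absurd (by simpa [hmk] using hval) ha


lemma _root_.AnalyticAt.tendsto_ofReal_pow_inv_mul_deriv {f : ℝ → ℂ} (hf : AnalyticAt ℝ f 0)
    {m : ℕ} (hm : m ≠ 0) {a : ℂ} (ha : a ≠ 0)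
    (h : Tendsto (fun s : ℝ => ((s : ℂ) ^ m)⁻¹ * f s) (𝓝[>] 0) (𝓝 a)) :
    Tendsto (fun s : ℝ => ((s : ℂ) ^ (m - 1))⁻¹ * deriv f s) (𝓝[>] 0) (𝓝 (m * a)) := by
  obtain ⟨u, hu, rfl, hfu⟩ := hf.exists_eventuallyEq_pow_smul_of_tendsto ha h
  have hderiv : ∀ᶠ s in 𝓝 (0 : ℝ),
      deriv f s = s ^ m • deriv u s + ((m : ℝ) * s ^ (m - 1)) • u s := by
    filter_upwards [Filter.EventuallyEq.deriv hfu, hu.eventually_analyticAt] with s hs hus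
    rw [hs]
    exact ((hasDerivAt_pow m s).smul hus.differentiableAt.hasDerivAt).deriv
  have hlim : Tendsto (fun s : ℝ => (m : ℂ) * u s + (s : ℂ) ^ 1 * deriv u s) (𝓝[>] 0)
      (𝓝 (m * u 0 + (0 : ℂ) ^ 1 * deriv u 0)) :=
    ((hu.continuousAt.tendsto.mono_left nhdsWithin_le_nhds).const_mul _).add
      ((tendsto_ofReal_pow_nhdsGT_zero 1).mul
        (hu.deriv.continuousAt.tendsto.mono_left nhdsWithin_le_nhds))
  rw [zero_pow one_ne_zero, zero_mul, add_zero] at hlim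
  refine hlim.congr' ?_
  filter_upwards [nhdsWithin_le_nhds hderiv, self_mem_nhdsWithin] with s hs (hs0 : 0 < s)
  have hs' : (s : ℂ) ≠ 0 := Complex.ofReal_ne_zero.mpr hs0.ne'
  obtain ⟨k, rfl⟩ := Nat.exists_eq_add_one_of_ne_zero hm
  rw [hs, Complex.real_smul, Complex.real_smul]
  push_cast
  field_simp
  ring

end Asymptotics

lemma dotProduct_ite_eq_zero_of_dotProduct_deriv_eq_zero {N : ℕ} {V : Fin N → ℕ}
    {x A : ℝ → Fin N → ℂ} {a ω : Fin N → ℂ} {ν m : ℕ} (hm : m ≠ 0)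
    (hVm : ∀ j, V j ≠ 0 → m ≤ V j) (hx : ∀ j, AnalyticAt ℝ (fun s => x s j) 0)
    (ha : ∀ j, V j ≠ 0 → a j ≠ 0)
    (hxa : ∀ j, V j ≠ 0 →
      Tendsto (fun s : ℝ => ((s : ℂ) ^ V j)⁻¹ * x s j) (𝓝[>] 0) (𝓝 (a j)))
    (hA : ∀ᶠ s in 𝓝[>] 0, A s ⬝ᵥ (fun j => deriv (fun s => x s j) s) = 0)
    (hω : ∀ j, Tendsto (fun s : ℝ => ((s : ℂ) ^ ν)⁻¹ * A s j) (𝓝[>] 0) (𝓝 (ω j)))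
    (hA0 : ∀ j, V j = 0 →
      Tendsto (fun s : ℝ => ((s : ℂ) ^ (ν + (m - 1)))⁻¹ * A s j) (𝓝[>] 0) (𝓝 0)) :
    ω ⬝ᵥ (fun j => if V j = m then a j else 0) = 0 := by
  have hterm : ∀ j, Tendsto
      (fun s : ℝ => ((s : ℂ) ^ (ν + (m - 1)))⁻¹ * (A s j * deriv (fun s => x s j) s))
      (𝓝[>] 0) (𝓝 (m * (ω j * if V j = m then a j else 0))) := by
    intro j
    by_cases hVj : V j = 0
    · have := (hA0 j hVj).mul ((hx j).deriv.continuousAt.tendsto.mono_left nhdsWithin_le_nhds)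
      rw [zero_mul] at this
      simpa [hVj, Ne.symm hm, mul_assoc] using this
    · have hx' := tendsto_ofReal_pow_inv_mul_of_le
        ((hx j).tendsto_ofReal_pow_inv_mul_deriv hVj (ha j hVj) (hxa j hVj))
        (Nat.sub_le_sub_right (hVm j hVj) 1)
      convert (hω j).mul hx' using 2 with s
      · rw [pow_add, mul_inv]
        ring
      by_cases hVjm : V j = m
      · simp only [hVjm, if_true]
        ring
      · have : m - 1 ≠ V j - 1 := by have := hVm j hVj; omega
        simp [hVjm, this]
  have hzero : Tendsto (fun s : ℝ => ∑ j, ((s : ℂ) ^ (ν + (m - 1)))⁻¹ *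
      (A s j * deriv (fun s => x s j) s)) (𝓝[>] 0) (𝓝 0) :=
    tendsto_const_nhds.congr' <| by
      filter_upwards [hA] with s hs
      rw [← Finset.mul_sum]
      exact ((congrArg _ hs).trans (mul_zero _)).symm
  have hsum := tendsto_nhds_unique (tendsto_finsetSum Finset.univ fun j _ => hterm j) hzero
  rw [← Finset.mul_sum] at hsum
  exact (mul_eq_zero.mp hsum).resolve_left (Nat.cast_ne_zero.mpr hm)

lemma dotProduct_eq_zero_of_tendsto_secant {N : ℕ} {V : Fin N → ℕ}
    {x y A : ℝ → Fin N → ℂ} {a ω ℓ : Fin N → ℂ} {ν o : ℕ} {j₀ : Fin N} (hj₀ : V j₀ ≠ 0)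
    (hVj₀ : ∀ j, V j ≠ 0 → V j₀ ≤ V j) (hx : ∀ j, AnalyticAt ℝ (fun s => x s j) 0)
    (ha : ∀ j, V j ≠ 0 → a j ≠ 0)
    (hxa : ∀ j, V j ≠ 0 →
      Tendsto (fun s : ℝ => ((s : ℂ) ^ V j)⁻¹ * x s j) (𝓝[>] 0) (𝓝 (a j)))
    (hy : ∀ j, V j ≠ 0 → ∀ᶠ s in 𝓝[>] 0, y s j = 0)
    (hℓ : ∀ j, Tendsto (fun s : ℝ => ((s : ℂ) ^ o)⁻¹ * (x s j - y s j)) (𝓝[>] 0) (𝓝 (ℓ j)))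
    (hA : ∀ᶠ s in 𝓝[>] 0, A s ⬝ᵥ (fun j => deriv (fun s => x s j) s) = 0)
    (hω : ∀ j, Tendsto (fun s : ℝ => ((s : ℂ) ^ ν)⁻¹ * A s j) (𝓝[>] 0) (𝓝 (ω j)))
    (hA0 : ∀ j, V j = 0 →
      Tendsto (fun s : ℝ => ((s : ℂ) ^ (ν + (V j₀ - 1)))⁻¹ * A s j) (𝓝[>] 0) (𝓝 0)) :
    ω ⬝ᵥ ℓ = 0 := by
  have hω0 : ∀ j, V j = 0 → ω j = 0 := fun j hj => tendsto_nhds_unique (hω j) <| by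
    simpa using tendsto_ofReal_pow_inv_mul_of_le (hA0 j hj) (Nat.le_add_right ν _)
  have hℓ' : ∀ j, V j ≠ 0 → o ≤ V j ∧ ℓ j = if o = V j then a j else 0 := fun j hj =>
    le_and_eq_of_tendsto_ofReal_pow_inv_mul (ha j hj) (hxa j hj) <| (hℓ j).congr' <| by
      filter_upwards [hy j hj] with s hs
      rw [hs, sub_zero]
  rcases (hℓ' j₀ hj₀).1.lt_or_eq with hlt | rfl
  · refine Finset.sum_eq_zero fun j _ => ?_
    by_cases hj : V j = 0
    · rw [hω0 j hj, zero_mul]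
    · rw [(hℓ' j hj).2, if_neg (by have := hVj₀ j hj; omega), mul_zero]
  · rw [← dotProduct_ite_eq_zero_of_dotProduct_deriv_eq_zero hj₀ hVj₀ hx ha hxa hA hω hA0]
    refine Finset.sum_congr rfl fun j _ => ?_
    by_cases hj : V j = 0
    · rw [hω0 j hj, zero_mul, zero_mul]
    · simp only [(hℓ' j hj).2, eq_comm]

section AlongCurves

variable {N : ℕ}

lemma tendsto_ofReal_pow_inv_mul_prod_pow {V : Fin N → ℕ} {x : ℝ → Fin N → ℂ} {b : Fin N → ℂ}
    (hx : ∀ j, Tendsto (fun s : ℝ => ((s : ℂ) ^ V j)⁻¹ * x s j) (𝓝[>] 0) (𝓝 (b j)))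
    (β : Fin N →₀ ℕ) :
    Tendsto (fun s : ℝ => ((s : ℂ) ^ ∑ j, V j * β j)⁻¹ * ∏ j, x s j ^ β j) (𝓝[>] 0)
      (𝓝 (∏ j, b j ^ β j)) := by
  refine (tendsto_finsetProd _ fun j _ => (hx j).pow (β j)).congr fun s => ?_
  simp only [mul_pow, Finset.prod_mul_distrib, inv_pow, Finset.prod_inv_distrib, ← pow_mul,
    Finset.prod_pow_eq_pow_sum]

lemma tendsto_ofReal_pow_inv_mul_eval {Q : MvPolynomial (Fin N) ℂ} {V : Fin N → ℕ}
    {x : ℝ → Fin N → ℂ}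
    (hx : ∀ j, ∃ b, Tendsto (fun s : ℝ => ((s : ℂ) ^ V j)⁻¹ * x s j) (𝓝[>] 0) (𝓝 b))
    {e : ℕ} (hQ : ∀ β ∈ Q.support, e < ∑ j, V j * β j) :
    Tendsto (fun s : ℝ => ((s : ℂ) ^ e)⁻¹ * eval (x s) Q) (𝓝[>] 0) (𝓝 0) := by
  choose b hb using hx
  have hterm : ∀ β ∈ Q.support, Tendsto
      (fun s : ℝ => coeff β Q * (((s : ℂ) ^ e)⁻¹ * ∏ j, x s j ^ β j)) (𝓝[>] 0) (𝓝 0) :=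
    fun β hβ => by
      simpa [(hQ β hβ).ne] using ((tendsto_ofReal_pow_inv_mul_of_le
        (tendsto_ofReal_pow_inv_mul_prod_pow hb β) (hQ β hβ).le).const_mul (coeff β Q))
  simpa [eval_eq', Finset.mul_sum, mul_left_comm] using tendsto_finsetSum _ hterm

lemma hasDerivAt_eval (P : MvPolynomial (Fin N) ℂ) {x : ℝ → Fin N → ℂ} {x' : Fin N → ℂ}
    {s : ℝ} (hx : ∀ j, HasDerivAt (fun r => x r j) (x' j) s) :
    HasDerivAt (fun r => eval (x r) P) (∑ j, eval (x s) (pderiv j P) * x' j) s := by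
  induction P using MvPolynomial.induction_on with
  | C a => simpa using hasDerivAt_const s a
  | add p q hp hq =>
    simp only [map_add, add_mul, Finset.sum_add_distrib]
    exact hp.add hq
  | mul_X p j ih =>
    have hv : ∑ i, eval (x s) (pderiv i (p * X j)) * x' i
        = (∑ i, eval (x s) (pderiv i p) * x' i) * x s j + eval (x s) p * x' j := by
      simp only [Derivation.leibniz, pderiv_X, smul_eq_mul, map_add, map_mul, eval_X, add_mul,
        Finset.sum_add_distrib, Finset.sum_mul, Pi.single_apply, mul_ite, mul_one, mul_zero,
        apply_ite (eval (x s)), map_zero, ite_mul, zero_mul, Finset.sum_ite_eq,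
        Finset.mem_univ, if_true]
      rw [add_comm]
      exact congrArg (· + _) (Finset.sum_congr rfl fun _ _ => by ring)
    simp only [hv, map_mul, eval_X]
    exact ih.mul (hx j)

end AlongCurves

section Gradients

variable {m : ℕ}

lemma analyticAt_pt_apply {ρ : ℝ → EuclideanSpace ℂ (Fin m)} {s : ℝ} (hρ : AnalyticAt ℝ ρ s)
    (j : Fin m) : AnalyticAt ℝ (fun r => pt (ρ r) j) s :=
  (((EuclideanSpace.proj j : EuclideanSpace ℂ (Fin m) →L[ℂ] ℂ).restrictScalars ℝ).analyticAt
    _).comp hρ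

lemma dvec_dotProduct_deriv_eq_zero {P : MvPolynomial (Fin m) ℂ}
    {ρ : ℝ → EuclideanSpace ℂ (Fin m)} {s : ℝ} (hρ : AnalyticAt ℝ ρ s)
    (hP : ∀ᶠ r in 𝓝 s, eval (pt (ρ r)) P = 0) :
    dvec P (ρ s) ⬝ᵥ (fun j => deriv (fun r => pt (ρ r) j) s) = 0 :=
  (hasDerivAt_eval P fun j => (analyticAt_pt_apply hρ j).differentiableAt.hasDerivAt).unique
    ((hasDerivAt_const s 0).congr_of_eventuallyEq hP)

lemma tendsto_ofReal_pow_inv_mul_dvec {P : MvPolynomial (Fin m) ℂ} {V : Fin m → ℕ}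
    {ρ : ℝ → EuclideanSpace ℂ (Fin m)}
    (hρ : ∀ j, ∃ b, Tendsto (fun s : ℝ => ((s : ℂ) ^ V j)⁻¹ * pt (ρ s) j) (𝓝[>] 0) (𝓝 b))
    {e : ℕ} (hP : ∀ γ ∈ P.support, e < ∑ j, V j * γ j) {j : Fin m} (hj : V j = 0) :
    Tendsto (fun s : ℝ => ((s : ℂ) ^ e)⁻¹ * dvec P (ρ s) j) (𝓝[>] 0) (𝓝 0) :=
  tendsto_ofReal_pow_inv_mul_eval hρ fun β hβ => by
    have := hP _ (mem_support_iff.mpr fun h => mem_support_iff.mp hβ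
      (by rw [coeff_pderiv, h, zero_mul]))
    simpa [mul_add, Finset.sum_add_distrib, Finsupp.single_apply, hj] using this

lemma tendsto_add_sum_eval_mul_zero {ι : Type*} (S : Finset ι) (c : ι → Polynomial ℂ)
    {f : ℝ → ℂ} {g : ι → ℝ → ℂ} (hf : Tendsto f (𝓝[>] 0) (𝓝 0))
    (hg : ∀ l, Tendsto (g l) (𝓝[>] 0) (𝓝 0)) :
    Tendsto (fun s : ℝ => f s + ∑ l ∈ S, (c l).eval (s : ℂ) * g l s) (𝓝[>] 0) (𝓝 0) := by
  have hc : ∀ l, Tendsto (fun s : ℝ => (c l).eval (s : ℂ)) (𝓝[>] 0)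
      (𝓝 ((c l).eval ((0 : ℝ) : ℂ))) := fun l =>
    (((c l).continuous.comp Complex.continuous_ofReal).tendsto 0).mono_left nhdsWithin_le_nhds
  simpa using hf.add (tendsto_finsetSum S fun l _ => (hc l).mul (hg l))

lemma tendsto_abs_pow_inv_smul_apply {f : ℝ → EuclideanSpace ℂ (Fin m)}
    {L : EuclideanSpace ℂ (Fin m)} {o : ℕ}
    (h : Tendsto (fun s : ℝ => (|s| ^ o)⁻¹ • f s) (𝓝[>] 0) (𝓝 L)) (j : Fin m) :
    Tendsto (fun s : ℝ => ((s : ℂ) ^ o)⁻¹ * pt (f s) j) (𝓝[>] 0) (𝓝 (pt L j)) := by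
  refine (((EuclideanSpace.proj j : EuclideanSpace ℂ (Fin m) →L[ℂ] ℂ).continuous.tendsto L).comp
    h).congr' ?_
  filter_upwards [self_mem_nhdsWithin] with s (hs : 0 < s)
  simp [pt, abs_of_pos hs, Complex.real_smul]

variable {ι : Type*} (P : ι → MvPolynomial (Fin m) ℂ) (c : ι → Polynomial ℂ) (k : ι)
  (S : Finset ι) {ρ : ℝ → EuclideanSpace ℂ (Fin m)}

lemma eventually_dvec_combination_dotProduct_deriv_eq_zero (hρ : AnalyticAt ℝ ρ 0) {ε : ℝ}
    (hε : 0 < ε) (hP : ∀ l, ∀ s ∈ Set.Ioo 0 ε, eval (pt (ρ s)) (P l) = 0) :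
    ∀ᶠ s in 𝓝[>] 0, (dvec (P k) (ρ s) + ∑ l ∈ S, (c l).eval (s : ℂ) • dvec (P l) (ρ s)) ⬝ᵥ
      (fun j => deriv (fun r => pt (ρ r) j) s) = 0 := by
  filter_upwards [Ioo_mem_nhdsGT hε, nhdsWithin_le_nhds hρ.eventually_analyticAt] with s hs hρs
  have hE : ∀ l, dvec (P l) (ρ s) ⬝ᵥ (fun j => deriv (fun r => pt (ρ r) j) s) = 0 := fun l =>
    dvec_dotProduct_deriv_eq_zero hρs <|
      Filter.mem_of_superset (isOpen_Ioo.mem_nhds hs) (hP l)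
  simp only [add_dotProduct, sum_dotProduct, smul_dotProduct, hE, smul_zero,
    Finset.sum_const_zero, add_zero]

lemma tendsto_ofReal_pow_inv_mul_dvec_combination {V : Fin m → ℕ}
    (hρ : ∀ j, ∃ b, Tendsto (fun s : ℝ => ((s : ℂ) ^ V j)⁻¹ * pt (ρ s) j) (𝓝[>] 0) (𝓝 b))
    {e : ℕ} (hP : ∀ l, ∀ γ ∈ (P l).support, e < ∑ j, V j * γ j) {j : Fin m} (hj : V j = 0) :
    Tendsto (fun s : ℝ => ((s : ℂ) ^ e)⁻¹ *
      (dvec (P k) (ρ s) + ∑ l ∈ S, (c l).eval (s : ℂ) • dvec (P l) (ρ s)) j) (𝓝[>] 0) (𝓝 0) := by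
  refine (tendsto_add_sum_eval_mul_zero S c (tendsto_ofReal_pow_inv_mul_dvec hρ (hP k) hj)
    fun l => tendsto_ofReal_pow_inv_mul_dvec hρ (hP l) hj).congr fun s => ?_
  simp [mul_add, Finset.mul_sum, mul_left_comm]

end Gradients

theorem leading_forms_kill_secant_limit_general (n k₀ nI kL kL' : ℕ)
    (F : Fin k₀ → MvPolynomial (Fin (n + 1)) ℂ)
    (hadm : NewtonAdmissible F) :
    ∃ ε₀ > (0 : ℝ),
      ∀ (hnI : 0 < nI) (hnIn : nI < n) (hkL' : kL' ≤ kL) (hkL : kL ≤ k₀)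
        (K : Set (Fin k₀)), (∀ k : Fin k₀, (k : ℕ) < kL → k ∈ K) →
      ∀ p₀ : EuclideanSpace ℂ (Fin (n + 1)), ‖p₀‖ < ε₀ →
        p₀ ∈ stratum F {i : Fin n | (i : ℕ) < nI} K →
        p₀ ∈ closure (stratum F Set.univ {k : Fin k₀ | (k : ℕ) < kL}) →
      ∀ (ρ ρ' : ℝ → EuclideanSpace ℂ (Fin (n + 1))) (ε : ℝ), 0 < ε →
        AnalyticAt ℝ ρ 0 → ρ 0 = p₀ →
        (∀ s ∈ Set.Ioo (0 : ℝ) ε,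
          ρ s ∈ stratum F Set.univ {k : Fin k₀ | (k : ℕ) < kL}) →
        AnalyticAt ℝ ρ' 0 → ρ' 0 = p₀ →
        (∀ s ∈ Set.Ioo (0 : ℝ) ε,
          ρ' s ∈ stratum F {i : Fin n | (i : ℕ) < nI} K) →
        (∀ s ∈ Set.Ioo (0 : ℝ) ε, ρ s ≠ ρ' s) →
      ∀ (W : Fin (n + 1) → ℕ) (a : Fin (n + 1) → ℂ),
        (∀ j, a j ≠ 0) →
        (∀ j, Tendsto (fun s : ℝ => ((s : ℂ) ^ W j)⁻¹ * pt (ρ s) j)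
          (𝓝[>] 0) (𝓝 (a j))) →
        (∀ i : Fin n, W i.succ = 0 ↔ (i : ℕ) < nI) →
        (∀ i i' : Fin n, i ≤ i' → W i.succ ≤ W i'.succ) →
        (∀ i : Fin n, (i : ℕ) < nI → a i.succ = pt p₀ i.succ) →
      ∀ d : ℕ,
        (∀ k : Fin k₀, (k : ℕ) < kL' →
          dmin (fun i => W i.succ) (specialize (pt p₀ 0) (F k)) = d) →
        (∀ k : Fin k₀, (k : ℕ) < kL →
          ((k : ℕ) < kL' ↔
            VanishesOn (specialize (pt p₀ 0) (F k)) {i : Fin n | (i : ℕ) < nI})) →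
      ∀ (σ : Equiv.Perm (Fin kL')) (c : Fin kL' → Fin kL' → Polynomial ℂ)
        (ν : Fin kL' → ℕ) (ω : Fin kL' → (Fin (n + 1) → ℂ)),
        Monotone ν →
        (∀ k, (ν k : ℤ) ≤ (d : ℤ) - (W (Fin.succ ⟨nI, hnIn⟩) : ℤ)) →
        (∀ k, ω k ≠ 0) →
        (∀ k : Fin kL',
          Tendsto (fun s : ℝ =>
              ((s : ℂ) ^ ν k)⁻¹ •
                (dvec (F (castIdx (le_trans hkL' hkL) (σ k))) (ρ s) +
                  ∑ l ∈ Finset.univ.filter (fun l : Fin kL' => l < k),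
                    Polynomial.eval (s : ℂ) (c k l) •
                      dvec (F (castIdx (le_trans hkL' hkL) (σ l))) (ρ s)))
            (𝓝[>] 0) (𝓝 (ω k))) →
      ∀ (oℓ : ℕ) (linf : EuclideanSpace ℂ (Fin (n + 1))), linf ≠ 0 →
        Tendsto (fun s : ℝ => (|s| ^ oℓ)⁻¹ • (ρ s - ρ' s))
          (𝓝[>] 0) (𝓝 linf) →
        ∀ k : Fin kL', (∑ j, ω k j * pt linf j) = 0 := by
  obtain ⟨_, -, r, hr, hadm⟩ := hadm
  refine ⟨r, hr, ?_⟩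
  intro _ hnIn hkL' hkL _ _ p₀ hp₀ _ _ ρ ρ' ε hε hρ _ hρS _ _ hρ'S _ W a ha hρa hW hWmono _ d hd _
    σ c ν ω _ hνd _ hω oℓ linf _ hℓ k
  set P : Fin kL' → MvPolynomial (Fin (n + 1)) ℂ := fun l => F (castIdx (le_trans hkL' hkL) (σ l))
  set V : Fin (n + 1) → ℕ := Fin.cons 0 fun i => W i.succ
  set j₀ : Fin (n + 1) := Fin.succ ⟨nI, hnIn⟩
  have hV : ∀ j, V j ≠ 0 → ∃ i : Fin n, j = i.succ ∧ nI ≤ i := fun j => Fin.cases (by simp [V])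
    (fun i hi => ⟨i, rfl, not_lt.mp fun h => hi ((hW i).mpr h)⟩) j
  have hj₀ : V j₀ ≠ 0 := fun h => (lt_irrefl nI) ((hW _).mp h)
  have hρV : ∀ j, ∃ b, Tendsto (fun s : ℝ => ((s : ℂ) ^ V j)⁻¹ * pt (ρ s) j) (𝓝[>] 0) (𝓝 b) :=
    Fin.cases ⟨_, tendsto_ofReal_pow_inv_mul_of_le (hρa 0) (Nat.zero_le _)⟩ fun i => ⟨_, hρa i.succ⟩
  have hweight : ∀ l, ∀ γ ∈ (P l).support, ν k + (V j₀ - 1) < ∑ j, V j * γ j := fun l γ hγ => by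
    have hdγ := (hd _ (σ l).isLt).symm.trans_le <| dmin_specialize_le_of_mem_support
      (τ := pt p₀ 0) (fun t ht => (hadm t ht).1 _) ((PiLp.norm_apply_le p₀ 0).trans_lt hp₀) _ hγ
    have hsum : ∑ j, V j * γ j = ∑ i : Fin n, W i.succ * γ i.succ := by
      simp [Fin.sum_univ_succ, V]
    have hV₀ : V j₀ = W j₀ := rfl
    have hνk := hνd k
    omega
  refine dotProduct_eq_zero_of_tendsto_secant (x := fun s => pt (ρ s)) (y := fun s => pt (ρ' s))
    hj₀ ?_ (analyticAt_pt_apply hρ) (fun j _ => ha j) ?_ ?_ (tendsto_abs_pow_inv_smul_apply hℓ)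
    (eventually_dvec_combination_dotProduct_deriv_eq_zero P (c k) k _ hρ hε fun l s hs =>
      ((hρS s hs).2 _).mpr ((σ l).isLt.trans_le hkL'))
    (tendsto_pi_nhds.mp (hω k))
    fun j hj => tendsto_ofReal_pow_inv_mul_dvec_combination P (c k) k _ hρV hweight hj
  · intro j hj
    obtain ⟨i, rfl, hi⟩ := hV j hj
    exact hWmono _ _ hi
  · intro j hj
    obtain ⟨i, rfl, -⟩ := hV j hj
    exact hρa i.succ
  · intro j hj
    obtain ⟨i, rfl, hi⟩ := hV j hj
    filter_upwards [Ioo_mem_nhdsGT hε] with s hs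
    by_contra h
    exact (not_lt.mpr hi) (((hρ'S s hs).1 i).mp h)

/-- §7.6 of Eyral–Oka. With a second real analytic path `ρ'(s) ∈ S^I(K)`,
`ℓ(s) := ρ(s) − ρ'(s)` of order `o_ℓ`, and `ℓ_∞ := lim_{s→0⁺} ℓ(s)/|s|^{o_ℓ}`, the leading
forms `ω_k` of Lemma `lemma-fundlil` satisfy `ω_k(ℓ_∞) = 0` for all `1 ≤ k ≤ k_{L'}`. -/
theorem leading_forms_kill_secant_limit (n k₀ nI kL kL' : ℕ)
    (F : Fin k₀ → MvPolynomial (Fin (n + 1)) ℂ)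
    (hconst : ∀ k, (F k).totalDegree ≠ 0)
    (hzero : ∀ (k : Fin k₀) (t : ℂ), eval (Fin.cases t fun _ => (0 : ℂ)) (F k) = 0)
    (hadm : NewtonAdmissible F) :
    ∃ ε₀ > (0 : ℝ),
      ∀ (hnI : 0 < nI) (hnIn : nI < n) (hkL' : kL' ≤ kL) (hkL : kL ≤ k₀)
        (K : Set (Fin k₀)), (∀ k : Fin k₀, (k : ℕ) < kL → k ∈ K) →
      ∀ p₀ : EuclideanSpace ℂ (Fin (n + 1)), ‖p₀‖ < ε₀ →
        p₀ ∈ stratum F {i : Fin n | (i : ℕ) < nI} K →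
        p₀ ∈ closure (stratum F Set.univ {k : Fin k₀ | (k : ℕ) < kL}) →
      ∀ (ρ ρ' : ℝ → EuclideanSpace ℂ (Fin (n + 1))) (ε : ℝ), 0 < ε →
        AnalyticAt ℝ ρ 0 → ρ 0 = p₀ →
        (∀ s ∈ Set.Ioo (0 : ℝ) ε,
          ρ s ∈ stratum F Set.univ {k : Fin k₀ | (k : ℕ) < kL}) →
        AnalyticAt ℝ ρ' 0 → ρ' 0 = p₀ →
        (∀ s ∈ Set.Ioo (0 : ℝ) ε,
          ρ' s ∈ stratum F {i : Fin n | (i : ℕ) < nI} K) →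
        (∀ s ∈ Set.Ioo (0 : ℝ) ε, ρ s ≠ ρ' s) →
      ∀ (W : Fin (n + 1) → ℕ) (a : Fin (n + 1) → ℂ),
        (∀ j, a j ≠ 0) →
        (∀ j, Tendsto (fun s : ℝ => ((s : ℂ) ^ W j)⁻¹ * pt (ρ s) j)
          (𝓝[>] 0) (𝓝 (a j))) →
        (∀ i : Fin n, W i.succ = 0 ↔ (i : ℕ) < nI) →
        (∀ i i' : Fin n, i ≤ i' → W i.succ ≤ W i'.succ) →
        (∀ i : Fin n, (i : ℕ) < nI → a i.succ = pt p₀ i.succ) →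
      ∀ d : ℕ,
        (∀ k : Fin k₀, (k : ℕ) < kL' →
          dmin (fun i => W i.succ) (specialize (pt p₀ 0) (F k)) = d) →
        (∀ k : Fin k₀, (k : ℕ) < kL →
          ((k : ℕ) < kL' ↔
            VanishesOn (specialize (pt p₀ 0) (F k)) {i : Fin n | (i : ℕ) < nI})) →
      ∀ (σ : Equiv.Perm (Fin kL')) (c : Fin kL' → Fin kL' → Polynomial ℂ)
        (ν : Fin kL' → ℕ) (ω : Fin kL' → (Fin (n + 1) → ℂ)),
        Monotone ν →
        (∀ k, (ν k : ℤ) ≤ (d : ℤ) - (W (Fin.succ ⟨nI, hnIn⟩) : ℤ)) →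
        (∀ k, ω k ≠ 0) →
        (∀ k : Fin kL',
          Tendsto (fun s : ℝ =>
              ((s : ℂ) ^ ν k)⁻¹ •
                (dvec (F (castIdx (le_trans hkL' hkL) (σ k))) (ρ s) +
                  ∑ l ∈ Finset.univ.filter (fun l : Fin kL' => l < k),
                    Polynomial.eval (s : ℂ) (c k l) •
                      dvec (F (castIdx (le_trans hkL' hkL) (σ l))) (ρ s)))
            (𝓝[>] 0) (𝓝 (ω k))) →
      ∀ (oℓ : ℕ) (linf : EuclideanSpace ℂ (Fin (n + 1))), linf ≠ 0 →
        Tendsto (fun s : ℝ => (|s| ^ oℓ)⁻¹ • (ρ s - ρ' s))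
          (𝓝[>] 0) (𝓝 linf) →
        ∀ k : Fin kL', (∑ j, ω k j * pt linf j) = 0 :=
  leading_forms_kill_secant_limit_general n k₀ nI kL kL' F hadm

end NewtonPaper
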